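/- Let g be a positive definite symmetric bilinear form on W, let e₁, …, eₙ be a g-orthonormal basis of W, set dᵢ⁻ = eᵢ ⊕ (−g(eᵢ,·)) ∈ W ⊕ W*, and let 𝒢̃ = κ(d₁⁻ · ⋯ · dₙ⁻) ∈ End(Λ*W*). Then for all ρ, τ ∈ Λ*W*, ⟨𝒢̃(ρ), τ⟩ = (−1)^{n(n+1)/2} ⟨ρ, 𝒢̃(τ)⟩. -/

import Mathlib

set_option synthInstance.maxHeartbeats 400000
set_option maxHeartbeats 1000000

open Module

/-- The quadratic form `Q(x ⊕ ξ) = −ξ(x)` on `W ⊕ W*`. -/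
noncomputable def genQ (W : Type*) [AddCommGroup W] [Module ℝ W] :
    QuadraticForm ℝ (W × Module.Dual ℝ W) :=
  LinearMap.BilinMap.toQuadraticMap
    (-((LinearMap.snd ℝ W (Module.Dual ℝ W)).compl₂ (LinearMap.fst ℝ W (Module.Dual ℝ W))))

/-- The `hat` involution on `Λ*W*`, acting on the degree-`p` component as
multiplication by `(−1)^{p(p+1)/2}`. -/
noncomputable def genHat (W : Type*) [AddCommGroup W] [Module ℝ W] :
    ExteriorAlgebra ℝ (Module.Dual ℝ W) →ₗ[ℝ] ExteriorAlgebra ℝ (Module.Dual ℝ W) :=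
  (DirectSum.toModule ℝ ℕ _ fun p =>
      ((-1 : ℝ) ^ (p * (p + 1) / 2)) • (⋀[ℝ]^p (Module.Dual ℝ W)).subtype) ∘ₗ
    (DirectSum.decomposeLinearEquiv fun i : ℕ => ⋀[ℝ]^i (Module.Dual ℝ W)).toLinearMap

/-- The pairing `⟨ρ, τ⟩`: the degree-`n` component of `ρ ∧ hat(τ)`. -/
noncomputable def genPairing (W : Type*) [AddCommGroup W] [Module ℝ W] (n : ℕ)
    (ρ τ : ExteriorAlgebra ℝ (Module.Dual ℝ W)) : ExteriorAlgebra ℝ (Module.Dual ℝ W) :=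
  GradedAlgebra.proj (fun i : ℕ => ⋀[ℝ]^i (Module.Dual ℝ W)) n (ρ * genHat W τ)

/-! Every generator `κ(w)`, `w ∈ W ⊕ W*`, is `(−1)^n`-self-adjoint for the pairing. On forms of
complementary degrees, `ξ ∧ ·` moves across by graded commutativity, and the contraction by `x`
moves across because it is a graded derivation and `ρ ∧ τ` vanishes in degree `n + 1`. Hence the
adjoint of `κ(d₁⁻ ⋯ dₙ⁻)` is `(−1)^{n·n} κ(dₙ⁻ ⋯ d₁⁻)`; the `dᵢ⁻` are pairwise `Q`-orthogonal, so
they anticommute and reversing the product costs `(−1)^{n(n−1)/2}`. -/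

open ExteriorAlgebra CliffordAlgebra

namespace ExteriorAlgebra

variable {R M : Type*} [CommRing R] [AddCommGroup M] [Module R M]

theorem ι_mem_exteriorPower_one (m : M) : ι R m ∈ ⋀[R]^1 M := by
  simpa only [pow_one] using LinearMap.mem_range_self (ι R) m

theorem ι_mul_eq_neg_one_pow_smul_mul_ι {p : ℕ} {x : ExteriorAlgebra R M} (hx : x ∈ ⋀[R]^p M)
    (m : M) : ι R m * x = ((-1 : R) ^ p) • (x * ι R m) := by
  induction hx using Submodule.pow_induction_on_left' with
  | algebraMap r => simp [Algebra.commutes]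
  | add x y i _ _ hx hy => rw [mul_add, add_mul, hx, hy, smul_add]
  | mem_mul a ha i x _ hx =>
    obtain ⟨a, rfl⟩ := ha
    rw [← mul_assoc, eq_neg_of_add_eq_zero_left (ι_add_mul_swap m a), neg_mul, mul_assoc, hx,
      mul_smul_comm, pow_succ, mul_neg_one, neg_smul, mul_assoc]

theorem contractLeft_eq_zero_of_mem_exteriorPower_zero (d : Module.Dual R M)
    {x : ExteriorAlgebra R M} (hx : x ∈ ⋀[R]^0 M) : contractLeft d x = 0 := by
  rw [exteriorPower, pow_zero, Submodule.mem_one] at hx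
  obtain ⟨r, rfl⟩ := hx
  exact contractLeft_algebraMap (Q := 0) d r

theorem contractLeft_mem_exteriorPower (d : Module.Dual R M) {p : ℕ} {x : ExteriorAlgebra R M}
    (hx : x ∈ ⋀[R]^p M) : contractLeft d x ∈ ⋀[R]^(p - 1) M := by
  induction hx using Submodule.pow_induction_on_left' with
  | algebraMap r => rw [contractLeft_algebraMap]; exact zero_mem _
  | add x y i _ _ hx hy => rw [map_add]; exact add_mem hx hy
  | mem_mul a ha i x hx ih =>
    obtain ⟨a, rfl⟩ := ha
    rw [contractLeft_ι_mul, Nat.succ_sub_one]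
    refine sub_mem (Submodule.smul_mem _ _ hx) ?_
    cases i with
    | zero => rw [contractLeft_eq_zero_of_mem_exteriorPower_zero d hx, mul_zero]; exact zero_mem _
    | succ k => simpa [add_comm 1 k] using SetLike.mul_mem_graded (ι_mem_exteriorPower_one a) ih

theorem contractLeft_mul_of_mem_exteriorPower (d : Module.Dual R M) {p : ℕ}
    {x : ExteriorAlgebra R M} (hx : x ∈ ⋀[R]^p M) (y : ExteriorAlgebra R M) :
    contractLeft d (x * y) = contractLeft d x * y + ((-1 : R) ^ p) • (x * contractLeft d y) := by
  induction hx using Submodule.pow_induction_on_left' with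
  | algebraMap r =>
    rw [contractLeft_algebraMap_mul, contractLeft_algebraMap, zero_mul, zero_add, pow_zero,
      one_smul]
  | add x x' i _ _ hx hx' =>
    simp only [add_mul, map_add, hx, hx', smul_add]
    abel
  | mem_mul a ha i x _ hx =>
    obtain ⟨a, rfl⟩ := ha
    rw [mul_assoc, contractLeft_ι_mul, contractLeft_ι_mul, hx, pow_succ, mul_add, mul_smul_comm,
      sub_mul, smul_mul_assoc, mul_neg_one, neg_smul, ← mul_assoc, ← mul_assoc]
    abel

theorem bilin_ext_of_mem_exteriorPower {N : Type*} [AddCommGroup N] [Module R N]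
    {B B' : ExteriorAlgebra R M →ₗ[R] ExteriorAlgebra R M →ₗ[R] N}
    (h : ∀ p q x y, x ∈ ⋀[R]^p M → y ∈ ⋀[R]^q M → B x y = B' x y) : B = B' := by
  refine LinearMap.ext fun x => LinearMap.ext fun y => ?_
  induction x using DirectSum.Decomposition.inductionOn (fun i : ℕ => ⋀[R]^i M) with
  | zero => simp
  | add x x' hx hx' => simp only [map_add, LinearMap.add_apply, hx, hx']
  | homogeneous x =>
    induction y using DirectSum.Decomposition.inductionOn (fun i : ℕ => ⋀[R]^i M) with
    | zero => simp
    | add y y' hy hy' => simp only [map_add, hy, hy']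
    | homogeneous y => exact h _ _ _ _ x.2 y.2

theorem eq_zero_of_mem_exteriorPower_of_finrank_lt {K V : Type*} [Field K] [AddCommGroup V]
    [Module K V] [FiniteDimensional K V] {m : ℕ} (hm : Module.finrank K V < m)
    {x : ExteriorAlgebra K V} (hx : x ∈ ⋀[K]^m V) : x = 0 := by
  have hbot : ⋀[K]^m V = ⊥ := by
    rw [← Submodule.finrank_eq_zero, exteriorPower.finrank_eq, Nat.choose_eq_zero_of_lt hm]
  simpa [hbot] using hx

end ExteriorAlgebra

section Anticommuting

variable {R A : Type*} [CommRing R] [Ring A] [Algebra R A]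

theorem List.prod_mul_eq_neg_one_pow_smul_of_anticomm (l : List A) (b : A)
    (h : ∀ a ∈ l, a * b = -(b * a)) : l.prod * b = ((-1 : R) ^ l.length) • (b * l.prod) := by
  induction l with
  | nil => simp
  | cons a l ih =>
    rw [List.forall_mem_cons] at h
    rw [List.prod_cons, mul_assoc, ih h.2, mul_smul_comm, ← mul_assoc, h.1, List.length_cons,
      pow_succ, mul_neg_one, neg_smul, neg_mul, mul_assoc, smul_neg]

theorem List.prod_reverse_ofFn_eq_neg_one_pow_smul_of_anticomm {m : ℕ} (a : Fin m → A)
    (h : _root_.Pairwise fun i j => a i * a j = -(a j * a i)) :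
    (List.ofFn a).reverse.prod = ((-1 : R) ^ (m * (m - 1) / 2)) • (List.ofFn a).prod := by
  induction m with
  | zero => simp
  | succ m ih =>
    have htail := ih (fun i => a i.succ) fun i j hij => h (Fin.succ_injective _ |>.ne hij)
    have hhead : ∀ b ∈ List.ofFn (fun i : Fin m => a i.succ), b * a 0 = -(a 0 * b) := by
      simp only [List.mem_ofFn, forall_exists_index, forall_apply_eq_imp_iff]
      exact fun i => h (Fin.succ_ne_zero i)
    rw [List.ofFn_succ, List.reverse_cons, List.prod_append, List.prod_singleton, htail,
      smul_mul_assoc, List.prod_mul_eq_neg_one_pow_smul_of_anticomm (R := R) _ _ hhead,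
      List.length_ofFn, List.prod_cons, smul_smul, ← pow_add, Nat.triangle_succ, add_comm]

end Anticommuting

theorem List.apply_prod_eq_pow_smul_apply_prod_reverse {R V N : Type*} [CommRing R]
    [AddCommGroup V] [Module R V] [AddCommGroup N] [Module R N] (B : V → V → N) (s : R)
    (l : List (Module.End R V)) (hl : ∀ f ∈ l, ∀ x y, B (f x) y = s • B x (f y)) (x y : V) :
    B (l.prod x) y = s ^ l.length • B x (l.reverse.prod y) := by
  induction l generalizing y with
  | nil => simp
  | cons f l ih =>
    rw [List.forall_mem_cons] at hl
    rw [List.prod_cons, Module.End.mul_apply, hl.1, ih hl.2, List.reverse_cons, List.prod_append,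
      List.prod_singleton, Module.End.mul_apply, smul_smul, List.length_cons, pow_succ']

theorem Nat.succ_mul_succ_succ_div_two (q : ℕ) :
    (q + 1) * (q + 1 + 1) / 2 = q * (q + 1) / 2 + (q + 1) := by
  have := Nat.triangle_succ (q + 1)
  simp only [Nat.add_sub_cancel] at this
  rw [mul_comm, this, mul_comm]

section Pairing

variable {W : Type*} [AddCommGroup W] [Module ℝ W]

theorem genHat_of_mem {q : ℕ} {τ : ExteriorAlgebra ℝ (Module.Dual ℝ W)}
    (hτ : τ ∈ ⋀[ℝ]^q (Module.Dual ℝ W)) : genHat W τ = ((-1 : ℝ) ^ (q * (q + 1) / 2)) • τ := by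
  rw [genHat, LinearMap.comp_apply, LinearEquiv.coe_coe, DirectSum.decomposeLinearEquiv_apply,
    DirectSum.decompose_of_mem (fun i : ℕ => ⋀[ℝ]^i (Module.Dual ℝ W)) hτ, ← DirectSum.lof_eq_of ℝ,
    DirectSum.toModule_lof]
  rfl

variable (W) in
noncomputable def genPairingₗ (n : ℕ) :
    ExteriorAlgebra ℝ (Module.Dual ℝ W) →ₗ[ℝ] ExteriorAlgebra ℝ (Module.Dual ℝ W) →ₗ[ℝ]
      ExteriorAlgebra ℝ (Module.Dual ℝ W) :=
  ((LinearMap.mul ℝ _).compl₂ (genHat W)).compr₂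
    (GradedAlgebra.proj (fun i : ℕ => ⋀[ℝ]^i (Module.Dual ℝ W)) n)

theorem genPairingₗ_apply (n : ℕ) (ρ τ : ExteriorAlgebra ℝ (Module.Dual ℝ W)) :
    genPairingₗ W n ρ τ = genPairing W n ρ τ :=
  rfl

@[simp]
theorem genPairing_zero_left (n : ℕ) (τ : ExteriorAlgebra ℝ (Module.Dual ℝ W)) :
    genPairing W n 0 τ = 0 :=
  (genPairingₗ W n).map_zero₂ τ

@[simp]
theorem genPairing_zero_right (n : ℕ) (ρ : ExteriorAlgebra ℝ (Module.Dual ℝ W)) :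
    genPairing W n ρ 0 = 0 :=
  (genPairingₗ W n ρ).map_zero

theorem genPairing_smul_right (n : ℕ) (r : ℝ) (ρ τ : ExteriorAlgebra ℝ (Module.Dual ℝ W)) :
    genPairing W n ρ (r • τ) = r • genPairing W n ρ τ :=
  (genPairingₗ W n ρ).map_smul r τ

theorem genPairing_of_mem_of_add_eq {n p q : ℕ} {ρ τ : ExteriorAlgebra ℝ (Module.Dual ℝ W)}
    (hρ : ρ ∈ ⋀[ℝ]^p (Module.Dual ℝ W)) (hτ : τ ∈ ⋀[ℝ]^q (Module.Dual ℝ W)) (h : p + q = n) :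
    genPairing W n ρ τ = ((-1 : ℝ) ^ (q * (q + 1) / 2)) • (ρ * τ) := by
  rw [genPairing, genHat_of_mem hτ, mul_smul_comm, map_smul, GradedAlgebra.proj_apply,
    DirectSum.decompose_of_mem_same (fun i : ℕ => ⋀[ℝ]^i (Module.Dual ℝ W))
      (h ▸ SetLike.mul_mem_graded hρ hτ)]

theorem genPairing_of_mem_of_add_ne {n p q : ℕ} {ρ τ : ExteriorAlgebra ℝ (Module.Dual ℝ W)}
    (hρ : ρ ∈ ⋀[ℝ]^p (Module.Dual ℝ W)) (hτ : τ ∈ ⋀[ℝ]^q (Module.Dual ℝ W)) (h : p + q ≠ n) :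
    genPairing W n ρ τ = 0 := by
  rw [genPairing, genHat_of_mem hτ, mul_smul_comm, map_smul, GradedAlgebra.proj_apply,
    DirectSum.decompose_of_mem_ne (fun i : ℕ => ⋀[ℝ]^i (Module.Dual ℝ W))
      (SetLike.mul_mem_graded hρ hτ) h, smul_zero]

theorem genPairing_ι_mul_left (n : ℕ) (ξ : Module.Dual ℝ W)
    (ρ τ : ExteriorAlgebra ℝ (Module.Dual ℝ W)) :
    genPairing W n (ι ℝ ξ * ρ) τ = ((-1 : ℝ) ^ n) • genPairing W n ρ (ι ℝ ξ * τ) := by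
  refine LinearMap.congr_fun₂ (f := (genPairingₗ W n).comp (LinearMap.mulLeft ℝ (ι ℝ ξ)))
    (g := ((-1 : ℝ) ^ n) • (genPairingₗ W n).compl₂ (LinearMap.mulLeft ℝ (ι ℝ ξ)))
    (bilin_ext_of_mem_exteriorPower fun p q x y hx hy => ?_) ρ τ
  simp only [LinearMap.comp_apply, LinearMap.compl₂_apply, LinearMap.smul_apply,
    LinearMap.mulLeft_apply, genPairingₗ_apply]
  have hξx := SetLike.mul_mem_graded (ι_mem_exteriorPower_one ξ) hx
  have hξy := SetLike.mul_mem_graded (ι_mem_exteriorPower_one ξ) hy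
  by_cases h : 1 + p + q = n
  · rw [genPairing_of_mem_of_add_eq hξx hy h, genPairing_of_mem_of_add_eq hx hξy (by omega),
      ι_mul_eq_neg_one_pow_smul_mul_ι hx, smul_mul_assoc, smul_smul, ← mul_assoc, smul_smul,
      add_comm 1 q, Nat.succ_mul_succ_succ_div_two, ← pow_add, ← pow_add]
    exact congrArg (· • _) (neg_one_pow_congr (by simp only [Nat.even_iff]; omega))
  · rw [genPairing_of_mem_of_add_ne hξx hy h, genPairing_of_mem_of_add_ne hx hξy (by omega),
      smul_zero]

theorem genPairing_contractLeft_left [FiniteDimensional ℝ W] {n : ℕ}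
    (hn : Module.finrank ℝ W = n) (d : Module.Dual ℝ (Module.Dual ℝ W))
    (ρ τ : ExteriorAlgebra ℝ (Module.Dual ℝ W)) :
    genPairing W n (contractLeft d ρ) τ = ((-1 : ℝ) ^ n) • genPairing W n ρ (contractLeft d τ) := by
  refine LinearMap.congr_fun₂ (f := (genPairingₗ W n).comp (contractLeft d))
    (g := ((-1 : ℝ) ^ n) • (genPairingₗ W n).compl₂ (contractLeft d))
    (bilin_ext_of_mem_exteriorPower fun p q x y hx hy => ?_) ρ τ
  simp only [LinearMap.comp_apply, LinearMap.compl₂_apply, LinearMap.smul_apply, genPairingₗ_apply]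
  have htop {m : ℕ} {z : ExteriorAlgebra ℝ (Module.Dual ℝ W)} (hm : n < m)
      (hz : z ∈ ⋀[ℝ]^m (Module.Dual ℝ W)) : z = 0 :=
    eq_zero_of_mem_exteriorPower_of_finrank_lt (by rwa [Subspace.dual_finrank_eq, hn]) hz
  have hdx := contractLeft_mem_exteriorPower d hx
  have hdy := contractLeft_mem_exteriorPower d hy
  rcases lt_or_ge n p with hp | hp
  · simp [htop hp hx]
  rcases lt_or_ge n q with hq | hq
  · simp [htop hq hy]
  by_cases h : p + q = n + 1
  · -- `x * y` lies above the top degree, so the Leibniz rule trades `d⌋x * y` for `x * d⌋y`.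
    have hleibniz := contractLeft_mul_of_mem_exteriorPower d hx y
    rw [htop (by omega) (SetLike.mul_mem_graded hx hy), map_zero] at hleibniz
    obtain ⟨q, rfl⟩ : ∃ q', q = q' + 1 := ⟨q - 1, by omega⟩
    rw [genPairing_of_mem_of_add_eq hdx hy (by omega),
      genPairing_of_mem_of_add_eq hx hdy (by omega), eq_neg_of_add_eq_zero_left hleibniz.symm,
      Nat.add_sub_cancel, Nat.succ_mul_succ_succ_div_two, smul_neg, smul_smul, smul_smul,
      ← neg_smul, ← pow_add, ← pow_add, neg_eq_neg_one_mul, ← pow_succ']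
    exact congrArg (· • _) (neg_one_pow_congr (by simp only [Nat.even_iff]; omega))
  · have hleft : genPairing W n (contractLeft d x) y = 0 := by
      rcases Nat.eq_zero_or_pos p with rfl | hp0
      · simp [contractLeft_eq_zero_of_mem_exteriorPower_zero d hx]
      · exact genPairing_of_mem_of_add_ne hdx hy (by omega)
    have hright : genPairing W n x (contractLeft d y) = 0 := by
      rcases Nat.eq_zero_or_pos q with rfl | hq0
      · simp [contractLeft_eq_zero_of_mem_exteriorPower_zero d hy]
      · exact genPairing_of_mem_of_add_ne hx hdy (by omega)
    rw [hleft, hright, smul_zero]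

theorem genPairing_apply_ι_left [FiniteDimensional ℝ W] {n : ℕ} (hn : Module.finrank ℝ W = n)
    (κ : CliffordAlgebra (genQ W) →ₐ[ℝ] Module.End ℝ (ExteriorAlgebra ℝ (Module.Dual ℝ W)))
    (hκ : ∀ (w : W × Module.Dual ℝ W) (ρ : ExteriorAlgebra ℝ (Module.Dual ℝ W)),
      κ (CliffordAlgebra.ι (genQ W) w) ρ =
        ExteriorAlgebra.ι ℝ w.2 * ρ - contractLeft (Module.Dual.eval ℝ W w.1) ρ)
    (w : W × Module.Dual ℝ W) (ρ τ : ExteriorAlgebra ℝ (Module.Dual ℝ W)) :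
    genPairing W n (κ (CliffordAlgebra.ι (genQ W) w) ρ) τ =
      ((-1 : ℝ) ^ n) • genPairing W n ρ (κ (CliffordAlgebra.ι (genQ W) w) τ) := by
  simp only [hκ, ← genPairingₗ_apply, map_sub, LinearMap.sub_apply, smul_sub]
  simp only [genPairingₗ_apply, genPairing_ι_mul_left, genPairing_contractLeft_left hn]

theorem genQ_isOrtho_iff (v w : W × Module.Dual ℝ W) :
    (genQ W).IsOrtho v w ↔ v.2 w.1 + w.2 v.1 = 0 := by
  rw [← QuadraticMap.isOrtho_polarBilin, QuadraticMap.polarBilin_apply_apply, genQ,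
    LinearMap.BilinMap.polar_toQuadraticMap]
  simp only [LinearMap.neg_apply, LinearMap.compl₂_apply, LinearMap.snd_apply, LinearMap.fst_apply]
  constructor <;> intro h <;> linarith

end Pairing

theorem genPairing_volume_adjoint_general (n : ℕ) (W : Type*) [AddCommGroup W] [Module ℝ W]
    [FiniteDimensional ℝ W] (hn : Module.finrank ℝ W = n)
    (g : W →ₗ[ℝ] W →ₗ[ℝ] ℝ)
    (e : Basis (Fin n) ℝ W)
    (honb : ∀ i j : Fin n, g (e i) (e j) = if i = j then 1 else 0)
    (κ : CliffordAlgebra (genQ W) →ₐ[ℝ] Module.End ℝ (ExteriorAlgebra ℝ (Module.Dual ℝ W)))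
    (hκ : ∀ (w : W × Module.Dual ℝ W) (ρ : ExteriorAlgebra ℝ (Module.Dual ℝ W)),
      κ (CliffordAlgebra.ι (genQ W) w) ρ =
        ExteriorAlgebra.ι ℝ w.2 * ρ -
          CliffordAlgebra.contractLeft (Module.Dual.eval ℝ W w.1) ρ)
    (ρ τ : ExteriorAlgebra ℝ (Module.Dual ℝ W)) :
    genPairing W n
        (κ ((List.ofFn fun i : Fin n =>
          CliffordAlgebra.ι (genQ W) ((e i, -(g (e i))) : W × Module.Dual ℝ W)).prod) ρ) τ =
      ((-1 : ℝ) ^ (n * (n + 1) / 2)) •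
        genPairing W n ρ
          (κ ((List.ofFn fun i : Fin n =>
            CliffordAlgebra.ι (genQ W) ((e i, -(g (e i))) : W × Module.Dual ℝ W)).prod) τ) := by
  set v : Fin n → CliffordAlgebra (genQ W) :=
    fun i => CliffordAlgebra.ι (genQ W) (e i, -(g (e i)))
  have hanti : Pairwise fun i j => v i * v j = -(v j * v i) := fun i j hij =>
    CliffordAlgebra.ι_mul_ι_comm_of_isOrtho <| (genQ_isOrtho_iff _ _).mpr <| by
      simp [honb, hij, hij.symm]
  have hadj := List.apply_prod_eq_pow_smul_apply_prod_reverse (genPairing W n) ((-1 : ℝ) ^ n)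
    ((List.ofFn v).map κ) (by simpa using fun i => genPairing_apply_ι_left hn κ hκ _) ρ τ
  rw [← map_list_prod, ← List.map_reverse, ← map_list_prod,
    List.prod_reverse_ofFn_eq_neg_one_pow_smul_of_anticomm (R := ℝ) v hanti] at hadj
  rw [hadj, map_smul, LinearMap.smul_apply, genPairing_smul_right, smul_smul, ← pow_mul,
    ← pow_add, List.length_map, List.length_ofFn]
  refine congrArg (· • _) (neg_one_pow_congr ?_)
  have htriangle := Nat.triangle_succ n
  rw [Nat.add_sub_cancel] at htriangle
  rw [mul_comm n (n + 1), htriangle]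
  simp only [Nat.even_add, Nat.even_mul, or_self]
  tauto

/-- Let `𝒢̃ = κ(d₁⁻ ⋯ dₙ⁻)` be the spinor action of the Clifford volume
element of a generalised metric (with orthonormal basis `eᵢ` for `g` and
`dᵢ⁻ = eᵢ ⊕ (−g(eᵢ,·))`). Then `⟨𝒢̃ ρ, τ⟩ = (−1)^{n(n+1)/2} ⟨ρ, 𝒢̃ τ⟩` for all
`ρ, τ ∈ Λ*W*`. -/
theorem genPairing_volume_adjoint (n : ℕ) (W : Type*) [AddCommGroup W] [Module ℝ W]
    [FiniteDimensional ℝ W] (hn : Module.finrank ℝ W = n)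
    (g : W →ₗ[ℝ] W →ₗ[ℝ] ℝ) (hsymm : ∀ x y : W, g x y = g y x)
    (hpos : ∀ x : W, x ≠ 0 → 0 < g x x)
    (e : Basis (Fin n) ℝ W)
    (honb : ∀ i j : Fin n, g (e i) (e j) = if i = j then 1 else 0)
    (κ : CliffordAlgebra (genQ W) →ₐ[ℝ] Module.End ℝ (ExteriorAlgebra ℝ (Module.Dual ℝ W)))
    (hκ : ∀ (w : W × Module.Dual ℝ W) (ρ : ExteriorAlgebra ℝ (Module.Dual ℝ W)),
      κ (CliffordAlgebra.ι (genQ W) w) ρ =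
        ExteriorAlgebra.ι ℝ w.2 * ρ -
          CliffordAlgebra.contractLeft (Module.Dual.eval ℝ W w.1) ρ)
    (ρ τ : ExteriorAlgebra ℝ (Module.Dual ℝ W)) :
    genPairing W n
        (κ ((List.ofFn fun i : Fin n =>
          CliffordAlgebra.ι (genQ W) ((e i, -(g (e i))) : W × Module.Dual ℝ W)).prod) ρ) τ =
      ((-1 : ℝ) ^ (n * (n + 1) / 2)) •
        genPairing W n ρ
          (κ ((List.ofFn fun i : Fin n =>
            CliffordAlgebra.ι (genQ W) ((e i, -(g (e i))) : W × Module.Dual ℝ W)).prod) τ) :=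
  genPairing_volume_adjoint_general n W hn g e honb κ hκ ρ τ
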